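/- arXiv:1408.3751 — 4 statements merged into one kernel-verified Lean document; each statement's English description precedes it below -/
import Mathlib

section
/- Let n ≠ 0, p = 2/n, c3 ≠ 0. Then u(t,r) = (c2 + c3 t)^{−n/2} · exp(i c1 − i c3 r²/(4(c2 + c3 t)) − (i k/c3) ln(c2 + c3 t)) satisfies i u_t = u_{rr} + ((n−1)/r) u_r + k |u|^{2/n} u on any domain where c2 + c3 t > 0 and r > 0. -/
/-!
Writing `s = c2 + c3 t > 0` and `s ^ (-n/2) = exp (-(n/2) log s)`, the solution is
`u = exp (a(t) + b(t) r²)` with `a = i c1 - (n/2 + i k/c3) log s` and `b = -i c3 / (4 s)`.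
Hence `u_r = 2 b r u`, `u_rr = ((2 b r)² + 2 b) u`, `u_t = (a' + b' r²) u` and
`|u| ^ (2/n) = 1/s`, so after dividing by `u` the equation is an identity between rational
functions of `s` and `r`.
-/

open Real

/-- The radial gNLS equation `i u_t = u_rr + ((n-1)/r) u_r + k |u|^p u` at a point `(t,r)`. -/
noncomputable def gnls (k p n : ℝ) (u : ℝ → ℝ → ℂ) (t r : ℝ) : Prop :=
  Complex.I * deriv (fun s => u s r) t =
    deriv (deriv (fun s => u t s)) r
      + (((n - 1) / r : ℝ) : ℂ) * deriv (fun s => u t s) r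
      + (k : ℂ) * ((‖u t r‖ ^ p : ℝ) : ℂ) * u t r

open Complex

theorem hasDerivAt_cexp_add_mul_sq (a b : ℂ) (y : ℝ) :
    HasDerivAt (fun y : ℝ => cexp (a + b * (y : ℂ) ^ 2))
      (cexp (a + b * (y : ℂ) ^ 2) * (2 * b * y)) y := by
  have hsq : HasDerivAt (fun y : ℝ => (y : ℂ) ^ 2) (2 * (y : ℂ)) y := by
    simpa using (hasDerivAt_pow 2 (y : ℂ)).comp_ofReal
  convert ((hsq.const_mul b).const_add a).cexp using 1
  ring

theorem deriv_cexp_add_mul_sq (a b : ℂ) :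
    deriv (fun y : ℝ => cexp (a + b * (y : ℂ) ^ 2))
      = fun y : ℝ => cexp (a + b * (y : ℂ) ^ 2) * (2 * b * y) :=
  funext fun y => (hasDerivAt_cexp_add_mul_sq a b y).deriv

theorem deriv_deriv_cexp_add_mul_sq (a b : ℂ) :
    deriv (deriv fun y : ℝ => cexp (a + b * (y : ℂ) ^ 2))
      = fun y : ℝ => cexp (a + b * (y : ℂ) ^ 2) * ((2 * b * y) ^ 2 + 2 * b) := by
  rw [deriv_cexp_add_mul_sq]
  funext y
  have hlin : HasDerivAt (fun y : ℝ => 2 * b * (y : ℂ)) (2 * b) y := by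
    simpa using (hasDerivAt_id (y : ℂ)).comp_ofReal.const_mul (2 * b)
  exact (((hasDerivAt_cexp_add_mul_sq a b y).mul hlin).congr_deriv (by ring)).deriv

section
variable (k n c1 c2 c3 : ℝ)

noncomputable def gnlsSolution (t r : ℝ) : ℂ :=
  (((c2 + c3 * t) ^ (-(n / 2)) : ℝ) : ℂ)
    * cexp (I * c1 - I * c3 * r ^ 2 / (4 * (c2 + c3 * t))
        - (I * k / c3) * (Real.log (c2 + c3 * t) : ℝ))

variable {k n c1 c2 c3}

theorem gnlsSolution_eq_cexp {t : ℝ} (hs : 0 < c2 + c3 * t) :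
    gnlsSolution k n c1 c2 c3 t = fun r : ℝ =>
      cexp ((I * c1 - (n / 2 + I * k / c3) * Real.log (c2 + c3 * t))
        + -(I * c3) / (4 * (c2 + c3 * t)) * (r : ℂ) ^ 2) := by
  funext r
  rw [gnlsSolution, Real.rpow_def_of_pos hs, ofReal_exp, ← Complex.exp_add]
  congr 1
  push_cast
  ring

theorem norm_gnlsSolution_rpow (hn : n ≠ 0) {t : ℝ} (hs : 0 < c2 + c3 * t) (r : ℝ) :
    ‖gnlsSolution k n c1 c2 c3 t r‖ ^ (2 / n) = (c2 + c3 * t)⁻¹ := by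
  have hphase : ‖cexp (I * c1 - I * c3 * r ^ 2 / (4 * (c2 + c3 * t))
      - (I * k / c3) * (Real.log (c2 + c3 * t) : ℝ))‖ = 1 := by
    rw [← norm_exp_ofReal_mul_I
      (c1 - c3 * r ^ 2 / (4 * (c2 + c3 * t)) - k / c3 * Real.log (c2 + c3 * t))]
    congr 2
    push_cast
    ring
  rw [gnlsSolution, norm_mul, hphase, mul_one, norm_real,
    Real.norm_of_nonneg (Real.rpow_nonneg hs.le _), ← Real.rpow_mul hs.le,
    show -(n / 2) * (2 / n) = -1 by field_simp, Real.rpow_neg_one]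

theorem hasDerivAt_gnlsSolution_time (hc3 : c3 ≠ 0) {t : ℝ} (hs : 0 < c2 + c3 * t) (r : ℝ) :
    HasDerivAt (fun s => gnlsSolution k n c1 c2 c3 s r)
      (gnlsSolution k n c1 c2 c3 t r * (I * c3 ^ 2 * r ^ 2 / (4 * (c2 + c3 * t) ^ 2)
        - (n * c3 / 2 + I * k) / (c2 + c3 * t))) t := by
  have hlin : HasDerivAt (fun s : ℝ => c2 + c3 * s) c3 t := by
    simpa using ((hasDerivAt_id t).const_mul c3).const_add c2
  have hlinC : HasDerivAt (fun s : ℝ => (c2 : ℂ) + c3 * s) c3 t := by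
    simpa using ((hasDerivAt_id t).ofReal_comp.const_mul (c3 : ℂ)).const_add (c2 : ℂ)
  have hs0 : ((c2 + c3 * t : ℝ) : ℂ) ≠ 0 := by exact_mod_cast hs.ne'
  have hc3C : (c3 : ℂ) ≠ 0 := by exact_mod_cast hc3
  push_cast at hs0
  have hsC : (4 * (c2 + c3 * t) : ℂ) ≠ 0 := mul_ne_zero (by norm_num) hs0
  have hphase := ((hasDerivAt_const t (I * c1)).fun_sub
      ((hlin.log hs.ne').ofReal_comp.const_mul (n / 2 + I * k / c3))).fun_add
    (((hasDerivAt_const t (-(I * c3))).fun_div (hlinC.const_mul 4) hsC).mul_const ((r : ℂ) ^ 2))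
  refine (hphase.cexp.congr_of_eventuallyEq ?_).congr_deriv ?_
  · filter_upwards [hlin.continuousAt.eventually (lt_mem_nhds hs)] with s hs'
    rw [gnlsSolution_eq_cexp hs']
  · rw [gnlsSolution_eq_cexp hs]
    congr 1
    push_cast
    field_simp
    ring

end

theorem stmt2_general (k n c1 c2 c3 : ℝ) (hn : n ≠ 0) (hc3 : c3 ≠ 0) :
    ∀ t r : ℝ, 0 < c2 + c3 * t → 0 < r →
      gnls k (2 / n) n
        (fun t r => (((c2 + c3 * t) ^ (-(n / 2)) : ℝ) : ℂ)
          * Complex.exp (Complex.I * c1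
              - Complex.I * c3 * r ^ 2 / (4 * (c2 + c3 * t))
              - (Complex.I * k / c3) * (Real.log (c2 + c3 * t) : ℝ))) t r := by
  intro t r hs hr
  show gnls k (2 / n) n (gnlsSolution k n c1 c2 c3) t r
  rw [gnls, (hasDerivAt_gnlsSolution_time hc3 hs r).deriv, norm_gnlsSolution_rpow hn hs,
    gnlsSolution_eq_cexp hs, deriv_deriv_cexp_add_mul_sq, deriv_cexp_add_mul_sq]
  have hsC : ((c2 + c3 * t : ℝ) : ℂ) ≠ 0 := by exact_mod_cast hs.ne'
  have hrC : (r : ℂ) ≠ 0 := by exact_mod_cast hr.ne'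
  push_cast at hsC ⊢
  field_simp
  linear_combination (-32 * k * (c2 + c3 * t) : ℂ) * I_sq

theorem stmt2 (k n c1 c2 c3 : ℝ) (hk : k ≠ 0) (hn : n ≠ 0) (hc3 : c3 ≠ 0) :
    ∀ t r : ℝ, 0 < c2 + c3 * t → 0 < r →
      gnls k (2 / n) n
        (fun t r => (((c2 + c3 * t) ^ (-(n / 2)) : ℝ) : ℂ)
          * Complex.exp (Complex.I * c1
              - Complex.I * c3 * r ^ 2 / (4 * (c2 + c3 * t))
              - (Complex.I * k / c3) * (Real.log (c2 + c3 * t) : ℝ))) t r :=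
  stmt2_general k n c1 c2 c3 hn hc3
end

section
/- Let n ≠ 2, 3, k > 0, c2 ≠ 0, and p = 2(3−n)/(n−2). Then u(t,r) = (c2² (n−2)²/k)^{(n−2)/(6−2n)} · r^{2−n} · exp(i c1 + i c2 r^{n−2}) satisfies i u_t = u_{rr} + ((n−1)/r) u_r + k |u|^p u for all t and all r > 0. -/
open Real

/-!
The profile is independent of `t`, so the equation reduces to `Δᵣ u + k |u|^p u = 0` with the radial
Laplacian `Δᵣ f = f'' + ((n-1)/r) f'`. For `f = r^a e^{i(c₀ + c r^b)}` the logarithmic derivative is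
`(a + i c b r^b) / r`, whence `Δᵣ f = (a(a+n-2) + i c b (2a+b+n-2) r^b - c² b² r^{2b}) r⁻² f`.
For `a = 2 - n`, `b = n - 2` the first two coefficients vanish, and the remaining term
`-c₂²(n-2)² r^{2n-6} f` is cancelled by the nonlinearity, because `|u|^p = C^p r^{2n-6}` and the
amplitude `C` is chosen so that `k C^p = c₂² (n-2)²`.
-/

open Complex

noncomputable def radialLaplacian (n : ℝ) (f : ℝ → ℂ) (r : ℝ) : ℂ :=
  deriv (deriv f) r + (((n - 1) / r : ℝ) : ℂ) * deriv f r

theorem radialLaplacian_const_mul (n : ℝ) (c : ℂ) (f : ℝ → ℂ) (r : ℝ) :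
    radialLaplacian n (fun s => c * f s) r = c * radialLaplacian n f r := by
  simp only [radialLaplacian, deriv_const_mul_field']
  ring

theorem gnls_const_iff {k p n t r : ℝ} {v : ℝ → ℂ} :
    gnls k p n (fun _ => v) t r ↔ radialLaplacian n v r + k * ((‖v r‖ ^ p : ℝ) : ℂ) * v r = 0 := by
  simp only [gnls, radialLaplacian, deriv_const', mul_zero]
  exact eq_comm

noncomputable def rpowChirp (a b c₀ c s : ℝ) : ℂ :=
  ((s ^ a : ℝ) : ℂ) * cexp (((c₀ + c * s ^ b : ℝ) : ℂ) * I)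

section rpowChirp

variable {a b c₀ c r : ℝ}

theorem norm_rpowChirp (hr : 0 ≤ r) : ‖rpowChirp a b c₀ c r‖ = r ^ a := by
  rw [rpowChirp, norm_mul, norm_exp_ofReal_mul_I, mul_one, norm_real, norm_of_nonneg (rpow_nonneg hr a)]

theorem hasDerivAt_rpowChirp (hr : 0 < r) :
    HasDerivAt (rpowChirp a b c₀ c) ((a / r + I * c * b * ((r ^ b : ℝ) : ℂ) / r) * rpowChirp a b c₀ c r) r := by
  have hpow (e : ℝ) : HasDerivAt (fun s : ℝ => ((s ^ e : ℝ) : ℂ)) ((e * r ^ (e - 1) : ℝ) : ℂ) r :=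
    (hasDerivAt_rpow_const (Or.inl hr.ne')).ofReal_comp
  have hphase : HasDerivAt (fun s : ℝ => ((c₀ + c * s ^ b : ℝ) : ℂ) * I)
      (((c * (b * r ^ (b - 1)) : ℝ) : ℂ) * I) r :=
    (((hasDerivAt_rpow_const (Or.inl hr.ne')).const_mul c).const_add c₀).ofReal_comp.mul_const I
  refine ((hpow a).mul hphase.cexp).congr_deriv ?_
  rw [rpowChirp, rpow_sub_one hr.ne', rpow_sub_one hr.ne']
  push_cast
  ring

theorem radialLaplacian_rpowChirp (n : ℝ) (hr : 0 < r) :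
    radialLaplacian n (rpowChirp a b c₀ c) r =
      (a * (a + n - 2) + I * c * b * (2 * a + b + n - 2) * ((r ^ b : ℝ) : ℂ)
          - c ^ 2 * b ^ 2 * ((r ^ b : ℝ) : ℂ) ^ 2) / (r : ℂ) ^ 2 * rpowChirp a b c₀ c r := by
  have hr0 : (r : ℂ) ≠ 0 := ofReal_ne_zero.mpr hr.ne'
  set g : ℝ → ℂ := fun s => a / s + I * c * b * ((s ^ b : ℝ) : ℂ) / s
  have hg : HasDerivAt g ((-a + I * c * b * (b - 1) * ((r ^ b : ℝ) : ℂ)) / (r : ℂ) ^ 2) r := by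
    have hid : HasDerivAt (fun s : ℝ => (s : ℂ)) 1 r := by
      simpa using (hasDerivAt_id r).ofReal_comp
    have hpow : HasDerivAt (fun s : ℝ => ((s ^ b : ℝ) : ℂ)) ((b * r ^ (b - 1) : ℝ) : ℂ) r :=
      (hasDerivAt_rpow_const (Or.inl hr.ne')).ofReal_comp
    refine (((hasDerivAt_const r (a : ℂ)).div hid hr0).add
      ((hpow.const_mul (I * c * b)).div hid hr0)).congr_deriv ?_
    rw [rpow_sub_one hr.ne']
    push_cast
    field_simp
    ring
  have hderiv : deriv (rpowChirp a b c₀ c) =ᶠ[nhds r] fun s => g s * rpowChirp a b c₀ c s :=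
    (eventually_gt_nhds hr).mono fun s hs => (hasDerivAt_rpowChirp hs).deriv
  have hderiv2 : HasDerivAt (fun s => g s * rpowChirp a b c₀ c s) _ r :=
    hg.mul (hasDerivAt_rpowChirp hr)
  rw [radialLaplacian, hderiv.deriv_eq, hderiv2.deriv,
    (hasDerivAt_rpowChirp hr).deriv]
  simp only [g]
  push_cast
  field_simp
  linear_combination (c ^ 2 * b ^ 2 * ((r ^ b : ℝ) : ℂ) ^ 2 * rpowChirp a b c₀ c r) * I_sq

end rpowChirp

theorem mul_rpow_rpow_div_of_mul_eq_one {k m e p : ℝ} (hk : 0 < k) (hm : 0 ≤ m) (hep : e * p = 1) :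
    k * ((m / k) ^ e) ^ p = m := by
  rw [← rpow_mul (div_nonneg hm hk.le), hep, rpow_one, mul_div_cancel₀ m hk.ne']

theorem stmt5_general (k n c1 c2 : ℝ) (hk : 0 < k) (hn2 : n ≠ 2) (hn3 : n ≠ 3) :
    ∀ t r : ℝ, 0 < r →
      gnls k (2 * (3 - n) / (n - 2)) n
        (fun _ r => (((c2 ^ 2 * (n - 2) ^ 2 / k) ^ ((n - 2) / (6 - 2 * n)) : ℝ) : ℂ)
          * ((r ^ (2 - n) : ℝ) : ℂ)
          * Complex.exp (Complex.I * c1 + Complex.I * c2 * ((r ^ (n - 2) : ℝ) : ℂ))) t r := by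
  intro t r hr
  set C := (c2 ^ 2 * (n - 2) ^ 2 / k) ^ ((n - 2) / (6 - 2 * n))
  have hn2' : n - 2 ≠ 0 := sub_ne_zero.mpr hn2
  have hn3' : 6 - 2 * n ≠ 0 := fun h => hn3 (by linarith)
  have hC : 0 ≤ C := rpow_nonneg (by positivity) _
  have hkC : (k : ℂ) * ((C ^ (2 * (3 - n) / (n - 2)) : ℝ) : ℂ) = c2 ^ 2 * (n - 2) ^ 2 := by
    have hexp : (n - 2) / (6 - 2 * n) * (2 * (3 - n) / (n - 2)) = 1 := by
      rw [div_mul_div_comm, div_eq_one_iff_eq (mul_ne_zero hn3' hn2')]; ring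
    exact_mod_cast mul_rpow_rpow_div_of_mul_eq_one hk (by positivity) hexp
  have hrp : (r ^ (2 - n)) ^ (2 * (3 - n) / (n - 2)) = (r ^ (n - 2)) ^ 2 / r ^ 2 := by
    rw [← rpow_mul hr.le, ← rpow_natCast, ← rpow_mul hr.le, ← rpow_natCast, ← rpow_sub hr]
    congr 1
    field_simp
    ring
  have hu (s : ℝ) : (C : ℂ) * ((s ^ (2 - n) : ℝ) : ℂ) * cexp (I * c1 + I * c2 * ((s ^ (n - 2) : ℝ) : ℂ))
      = C * rpowChirp (2 - n) (n - 2) c1 c2 s := by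
    rw [rpowChirp, mul_assoc]
    push_cast
    ring_nf
  simp_rw [hu]
  rw [gnls_const_iff, radialLaplacian_const_mul, radialLaplacian_rpowChirp n hr, norm_mul,
    norm_rpowChirp hr.le, norm_real, norm_of_nonneg hC, mul_rpow hC (rpow_nonneg hr.le _), hrp]
  have hr0 : (r : ℂ) ≠ 0 := ofReal_ne_zero.mpr hr.ne'
  push_cast
  field_simp
  linear_combination (C * rpowChirp (2 - n) (n - 2) c1 c2 r * ((r ^ (n - 2) : ℝ) : ℂ) ^ 2) * hkC

theorem stmt5 (k n c1 c2 : ℝ) (hk : 0 < k) (hn2 : n ≠ 2) (hn3 : n ≠ 3) (hc2 : c2 ≠ 0) :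
    ∀ t r : ℝ, 0 < r →
      gnls k (2 * (3 - n) / (n - 2)) n
        (fun _ r => (((c2 ^ 2 * (n - 2) ^ 2 / k) ^ ((n - 2) / (6 - 2 * n)) : ℝ) : ℂ)
          * ((r ^ (2 - n) : ℝ) : ℂ)
          * Complex.exp (Complex.I * c1 + Complex.I * c2 * ((r ^ (n - 2) : ℝ) : ℂ))) t r :=
  stmt5_general k n c1 c2 hk hn2 hn3
end

section
/- Let n ≠ 0, 2, and p = −1. Then u(t,r) = (−k r²/(2n) + c3 r^{2−n} + c2) exp(i c1) satisfies i u_t = u_{rr} + ((n−1)/r) u_r + k |u|^{−1} u on any domain where r > 0 and −k r²/(2n) + c3 r^{2−n} + c2 > 0. -/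
/-!
For a standing wave `f r * exp (i c)` with `f > 0` the time derivative vanishes and
`u / |u| = exp (i c)`, so the equation reduces to the real linear ODE
`f'' + ((n - 1) / r) f' + k = 0`. The profile solves it because `r ^ 2 / (2 * n)` has radial
Laplacian `1` in dimension `n`, while `r ^ (2 - n)` and the constants are radially harmonic.
-/

open Real

/-- The radial gNLS equation with power `p = -1`:
`i u_t = u_rr + (m/r) u_r + k u/|u|` at a point `(t,r)`, where `m = n - 1`. -/
noncomputable def gnlsM1 (k m : ℝ) (u : ℝ → ℝ → ℂ) (t r : ℝ) : Prop :=
  Complex.I * deriv (fun s => u s r) t =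
    deriv (deriv (fun s => u t s)) r
      + ((m / r : ℝ) : ℂ) * deriv (fun s => u t s) r
      + (k : ℂ) * (u t r / ((‖u t r‖ : ℝ) : ℂ))

open Filter Topology

theorem deriv_ofReal_comp (f : ℝ → ℝ) (x : ℝ) :
    deriv (fun s => (f s : ℂ)) x = ((deriv f x : ℝ) : ℂ) := by
  by_cases hf : DifferentiableAt ℝ f x
  · exact hf.hasDerivAt.ofReal_comp.deriv
  · have hf' : ¬DifferentiableAt ℝ (fun s => (f s : ℂ)) x := fun h =>
      hf (by simpa [Function.comp_def] using Complex.reCLM.differentiableAt.comp x h)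
    rw [deriv_zero_of_not_differentiableAt hf, deriv_zero_of_not_differentiableAt hf',
      Complex.ofReal_zero]

theorem deriv_ofReal_comp_mul_const (f : ℝ → ℝ) (e : ℂ) :
    deriv (fun s => (f s : ℂ) * e) = fun s => ((deriv f s : ℝ) : ℂ) * e := by
  funext s
  rw [deriv_mul_const_field, deriv_ofReal_comp]

theorem gnlsM1_ofReal_mul_exp_iff (k m c : ℝ) (f : ℝ → ℝ) (t r : ℝ) (hf : 0 < f r) :
    gnlsM1 k m (fun _ s => (f s : ℂ) * Complex.exp (Complex.I * c)) t r ↔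
      deriv (deriv f) r + m / r * deriv f r + k = 0 := by
  have hnorm : ‖(f r : ℂ) * Complex.exp (Complex.I * c)‖ = f r := by
    rw [norm_mul, Complex.norm_exp_I_mul_ofReal, mul_one, Complex.norm_real,
      Real.norm_of_nonneg hf.le]
  have hphase :
      (f r : ℂ) * Complex.exp (Complex.I * c) / (f r : ℂ) = Complex.exp (Complex.I * c) :=
    mul_div_cancel_left₀ _ (Complex.ofReal_ne_zero.mpr hf.ne')
  unfold gnlsM1
  beta_reduce
  rw [deriv_const, mul_zero, deriv_ofReal_comp_mul_const, deriv_ofReal_comp_mul_const, hnorm,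
    hphase]
  beta_reduce
  have hfactor : ((deriv (deriv f) r : ℝ) : ℂ) * Complex.exp (Complex.I * c)
        + ((m / r : ℝ) : ℂ) * (((deriv f r : ℝ) : ℂ) * Complex.exp (Complex.I * c))
        + (k : ℂ) * Complex.exp (Complex.I * c) =
      ((deriv (deriv f) r + m / r * deriv f r + k : ℝ) : ℂ) * Complex.exp (Complex.I * c) := by
    push_cast
    ring
  rw [hfactor, eq_comm, mul_eq_zero, Complex.ofReal_eq_zero, or_iff_left (Complex.exp_ne_zero _)]

noncomputable def standingProfile (k n c2 c3 r : ℝ) : ℝ :=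
  -k * r ^ 2 / (2 * n) + c3 * r ^ (2 - n) + c2

section standingProfile

variable {k n c2 c3 r : ℝ}

theorem hasDerivAt_standingProfile (hr : 0 < r) :
    HasDerivAt (standingProfile k n c2 c3) (-k * r / n + c3 * ((2 - n) * r ^ (1 - n))) r := by
  have hquad : HasDerivAt (fun s : ℝ => -k * s ^ 2 / (2 * n)) (-k * r / n) r := by
    refine (((hasDerivAt_pow 2 r).const_mul (-k)).div_const (2 * n)).congr_deriv ?_
    norm_num
    ring
  have hpow : HasDerivAt (fun s : ℝ => s ^ (2 - n)) ((2 - n) * r ^ (1 - n)) r := by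
    convert Real.hasDerivAt_rpow_const (p := 2 - n) (Or.inl hr.ne') using 3
    ring
  exact (hquad.add (hpow.const_mul c3)).add_const c2

theorem deriv_deriv_standingProfile (hr : 0 < r) :
    deriv (deriv (standingProfile k n c2 c3)) r =
      -k / n + c3 * ((2 - n) * ((1 - n) * r ^ (-n))) := by
  have hderiv : deriv (standingProfile k n c2 c3)
      =ᶠ[𝓝 r] fun s => -k * s / n + c3 * ((2 - n) * s ^ (1 - n)) :=
    (eventually_gt_nhds hr).mono fun s hs => (hasDerivAt_standingProfile hs).deriv
  have hpow : HasDerivAt (fun s : ℝ => s ^ (1 - n)) ((1 - n) * r ^ (-n)) r := by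
    convert Real.hasDerivAt_rpow_const (p := 1 - n) (Or.inl hr.ne') using 3
    ring
  have hlin : HasDerivAt (fun s : ℝ => -k * s / n) (-k / n) r := by
    simpa using ((hasDerivAt_id r).const_mul (-k)).div_const n
  rw [hderiv.deriv_eq]
  exact (hlin.add ((hpow.const_mul (2 - n)).const_mul c3)).deriv

theorem standingProfile_radial_ode (hn : n ≠ 0) (hr : 0 < r) :
    deriv (deriv (standingProfile k n c2 c3)) r
      + (n - 1) / r * deriv (standingProfile k n c2 c3) r + k = 0 := by
  rw [deriv_deriv_standingProfile hr, (hasDerivAt_standingProfile hr).deriv,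
    show (1 : ℝ) - n = 1 + -n by ring, Real.rpow_add hr, Real.rpow_one]
  field_simp
  ring

end standingProfile

theorem stmt6_general (k n c1 c2 c3 : ℝ) (hn0 : n ≠ 0) :
    ∀ t r : ℝ, 0 < r → 0 < -k * r ^ 2 / (2 * n) + c3 * (r ^ (2 - n) : ℝ) + c2 →
      gnlsM1 k (n - 1)
        (fun _ r => ((-k * r ^ 2 / (2 * n) + c3 * (r ^ (2 - n) : ℝ) + c2 : ℝ) : ℂ)
          * Complex.exp (Complex.I * c1)) t r := fun t r hr hpos =>
  (gnlsM1_ofReal_mul_exp_iff k (n - 1) c1 (standingProfile k n c2 c3) t r hpos).mpr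
    (standingProfile_radial_ode hn0 hr)

theorem stmt6 (k n c1 c2 c3 : ℝ) (hk : k ≠ 0) (hn0 : n ≠ 0) (hn2 : n ≠ 2) :
    ∀ t r : ℝ, 0 < r → 0 < -k * r ^ 2 / (2 * n) + c3 * (r ^ (2 - n) : ℝ) + c2 →
      gnlsM1 k (n - 1)
        (fun _ r => ((-k * r ^ 2 / (2 * n) + c3 * (r ^ (2 - n) : ℝ) + c2 : ℝ) : ℂ)
          * Complex.exp (Complex.I * c1)) t r :=
  stmt6_general k n c1 c2 c3 hn0
end

section
/- Let n = 0, p = −1. Then u(t,r) = (−(k/2) r² ln r + c3 r² + c2) exp(i c1) satisfies i u_t = u_{rr} − (1/r) u_r + k u/|u| on any domain where r > 0 and −(k/2) r² ln r + c3 r² + c2 > 0. -/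
open Real

/-! A stationary wave `u(t,r) = f(r) e` with `f > 0` and `|e| = 1` has `u/|u| = e`, so the
equation reduces to the linear ODE `f'' + (m/r) f' + k = 0`, which the profile
`-(k/2) r² log r + c₃ r² + c₂` solves for `m = -1`. -/

open Filter Topology

theorem gnlsM1_ofReal_mul_of_ode {k m r : ℝ} {f f' : ℝ → ℝ} {f'' : ℝ} {e : ℂ}
    (he : ‖e‖ = 1) (hf : ∀ᶠ s in 𝓝 r, HasDerivAt f (f' s) s) (hf' : HasDerivAt f' f'' r)
    (hpos : 0 < f r) (hode : f'' + m / r * f' r + k = 0) (t : ℝ) :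
    gnlsM1 k m (fun _ s => (f s : ℂ) * e) t r := by
  have hu_r : deriv (fun s => (f s : ℂ) * e) =ᶠ[𝓝 r] fun s => (f' s : ℂ) * e :=
    hf.mono fun s hs => (hs.ofReal_comp.mul_const e).deriv
  have hu_rr : deriv (deriv fun s => (f s : ℂ) * e) r = f'' * e := by
    rw [hu_r.deriv_eq]
    exact (hf'.ofReal_comp.mul_const e).deriv
  have hphase : (f r : ℂ) * e / ((‖(f r : ℂ) * e‖ : ℝ) : ℂ) = e := by
    have hf0 : (f r : ℂ) ≠ 0 := Complex.ofReal_ne_zero.mpr hpos.ne'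
    rw [norm_mul, he, mul_one, Complex.norm_real, Real.norm_of_nonneg hpos.le,
      mul_div_cancel_left₀ e hf0]
  unfold gnlsM1
  rw [deriv_const, hu_rr, hu_r.eq_of_nhds, hphase, mul_zero]
  calc (0 : ℂ) = ((f'' + m / r * f' r + k : ℝ) : ℂ) * e := by
        rw [hode, Complex.ofReal_zero, zero_mul]
    _ = _ := by push_cast; ring

theorem hasDerivAt_logProfile (k c2 c3 : ℝ) {s : ℝ} (hs : s ≠ 0) :
    HasDerivAt (fun s => -(k / 2) * s ^ 2 * log s + c3 * s ^ 2 + c2)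
      (-k * s * log s - k / 2 * s + 2 * c3 * s) s := by
  have := ((((hasDerivAt_pow 2 s).const_mul (-(k / 2))).fun_mul (hasDerivAt_log hs)).fun_add
    ((hasDerivAt_pow 2 s).const_mul c3)).add_const c2
  refine this.congr_deriv ?_
  norm_num
  field_simp
  ring

theorem hasDerivAt_deriv_logProfile (k c3 : ℝ) {s : ℝ} (hs : s ≠ 0) :
    HasDerivAt (fun s => -k * s * log s - k / 2 * s + 2 * c3 * s)
      (-k * log s - 3 * k / 2 + 2 * c3) s := by
  have := ((((hasDerivAt_id' s).const_mul (-k)).fun_mul (hasDerivAt_log hs)).fun_sub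
    ((hasDerivAt_id' s).const_mul (k / 2))).fun_add ((hasDerivAt_id' s).const_mul (2 * c3))
  refine this.congr_deriv ?_
  field_simp
  ring

theorem stmt8_general (k c1 c2 c3 : ℝ) :
    ∀ t r : ℝ, 0 < r → 0 < -(k / 2) * r ^ 2 * Real.log r + c3 * r ^ 2 + c2 →
      gnlsM1 k (-1)
        (fun _ r => ((-(k / 2) * r ^ 2 * Real.log r + c3 * r ^ 2 + c2 : ℝ) : ℂ)
          * Complex.exp (Complex.I * c1)) t r := by
  intro t r hr hpos
  have hphase : ‖Complex.exp (Complex.I * c1)‖ = 1 := by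
    rw [mul_comm]
    exact Complex.norm_exp_ofReal_mul_I c1
  refine gnlsM1_ofReal_mul_of_ode hphase ?_ (hasDerivAt_deriv_logProfile k c3 hr.ne') hpos ?_ t
  · filter_upwards [lt_mem_nhds hr] with s hs
    exact hasDerivAt_logProfile k c2 c3 hs.ne'
  · field_simp
    ring

theorem stmt8 (k c1 c2 c3 : ℝ) (hk : k ≠ 0) :
    ∀ t r : ℝ, 0 < r → 0 < -(k / 2) * r ^ 2 * Real.log r + c3 * r ^ 2 + c2 →
      gnlsM1 k (-1)
        (fun _ r => ((-(k / 2) * r ^ 2 * Real.log r + c3 * r ^ 2 + c2 : ℝ) : ℂ)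
          * Complex.exp (Complex.I * c1)) t r :=
  stmt8_general k c1 c2 c3
end
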